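/- The map from ST-structures to Chu spaces over 3 = {0, ½, 1}, sending each ST-configuration (S,T) to the state assigning 1 to events in T, ½ to events in S\T, and 0 to events outside S, is a bijection between ST-structures over E and subsets of 3^E (i.e., Chu spaces over 3 with event set E), after quotienting by the ST ⇒ (S,S) closure being matched by the corresponding closure on states. -/

import Mathlib

/-! The translation has the explicit inverse `x ↦ (x⁻¹{½, 1}, x⁻¹{1})`, so taking images is a
bijection of power sets. It intertwines `(S, T) ↦ (S, S)` with raising `½` to `1`, and for an
injective map intertwining two self-maps, a set is closed under the first exactly when its image
is closed under the second. -/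

/-- An ST-configuration over `E` is a pair of finite sets of events. -/
abbrev STConfig (E : Type*) := Finset E × Finset E

/-- The three truth values `0 < ½ < 1` of Chu spaces over 3. -/
inductive Tri : Type
  | zero | half | one
deriving DecidableEq

variable {E : Type*} [DecidableEq E]

/-- The state of a Chu space over 3 associated to an ST-configuration `(S,T)`
(with `T ⊆ S`): events in `T` get `1`, events in `S \ T` get `½`, events
outside `S` get `0`. The support `{e | x e ≠ 0}` is finite. -/
def chuOf (c : {c : STConfig E // c.2 ⊆ c.1}) :
    {x : E → Tri // {e | x e ≠ Tri.zero}.Finite} :=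
  ⟨fun e => if e ∈ c.1.2 then Tri.one else if e ∈ c.1.1 then Tri.half else Tri.zero,
   Set.Finite.subset c.1.1.finite_toSet (by
     intro e he
     simp only [Set.mem_setOf_eq] at he
     by_contra hS
     apply he
     have hS' : e ∉ c.1.1 := by simpa using hS
     have hT : e ∉ c.1.2 := fun h => hS' (c.2 h)
     simp [hS', hT])⟩

/-- Raising all `½` values of a finite-support state to `1`
(corresponding to `(S,T) ↦ (S,S)`). -/
def raiseChu (x : {x : E → Tri // {e | x e ≠ Tri.zero}.Finite}) :
    {x : E → Tri // {e | x e ≠ Tri.zero}.Finite} :=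
  ⟨fun e => if x.1 e = Tri.half then Tri.one else x.1 e,
   x.2.subset (by
     intro e he
     simp only [Set.mem_setOf_eq] at he ⊢
     intro h
     apply he
     rw [h]
     decide)⟩

theorem Function.Semiconj.mapsTo_image_iff {α β : Type*} {f : α → β} {fa : α → α}
    {fb : β → β} {s t : Set α} (h : Function.Semiconj f fa fb) (hf : Function.Injective f) :
    Set.MapsTo fb (f '' s) (f '' t) ↔ Set.MapsTo fa s t :=
  ⟨fun H x hx => hf.mem_set_image.1 (h x ▸ H (Set.mem_image_of_mem f hx)), h.mapsTo_image⟩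

noncomputable def stOf (x : {x : E → Tri // {e | x e ≠ Tri.zero}.Finite}) :
    {c : STConfig E // c.2 ⊆ c.1} :=
  ⟨(x.2.toFinset, x.2.toFinset.filter (x.1 · = Tri.one)), Finset.filter_subset _ _⟩

theorem chuOf_apply (c : {c : STConfig E // c.2 ⊆ c.1}) (e : E) :
    (chuOf c).1 e = if e ∈ c.1.2 then Tri.one else if e ∈ c.1.1 then Tri.half else Tri.zero :=
  rfl

theorem stOf_chuOf (c : {c : STConfig E // c.2 ⊆ c.1}) : stOf (chuOf c) = c := by
  obtain ⟨⟨S, T⟩, hTS : T ⊆ S⟩ := c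
  have hS (e : E) : (chuOf ⟨(S, T), hTS⟩).1 e ≠ Tri.zero ↔ e ∈ S := by
    by_cases hT : e ∈ T
    · simp [chuOf_apply, hT, hTS hT]
    · by_cases hS : e ∈ S <;> simp [chuOf_apply, hT, hS]
  have hT (e : E) : (chuOf ⟨(S, T), hTS⟩).1 e = Tri.one ↔ e ∈ T := by
    by_cases hT : e ∈ T <;> by_cases hS : e ∈ S <;> simp [chuOf_apply, hT, hS]
  ext e
  · simp [stOf, hS]
  · simpa [stOf, hS, hT] using @hTS e

theorem chuOf_stOf (x : {x : E → Tri // {e | x e ≠ Tri.zero}.Finite}) : chuOf (stOf x) = x := by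
  ext e
  cases hx : x.1 e <;> simp [chuOf_apply, stOf, hx]

noncomputable def chuEquiv :
    {c : STConfig E // c.2 ⊆ c.1} ≃ {x : E → Tri // {e | x e ≠ Tri.zero}.Finite} where
  toFun := chuOf
  invFun := stOf
  left_inv := stOf_chuOf
  right_inv := chuOf_stOf

theorem chuOf_bijective : Function.Bijective (chuOf (E := E)) :=
  chuEquiv.bijective

def saturate (c : {c : STConfig E // c.2 ⊆ c.1}) : {c : STConfig E // c.2 ⊆ c.1} :=
  ⟨(c.1.1, c.1.1), Finset.Subset.refl _⟩

theorem chuOf_saturate (c : {c : STConfig E // c.2 ⊆ c.1}) :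
    chuOf (saturate c) = raiseChu (chuOf c) := by
  ext e
  by_cases hT : e ∈ c.1.2
  · simp [raiseChu, chuOf_apply, saturate, hT, c.2 hT]
  · by_cases hS : e ∈ c.1.1 <;> simp [raiseChu, chuOf_apply, saturate, hT, hS]

/-- the translation of ST-configurations into states over
`3 = {0,½,1}` is a bijection onto the finite-support states; consequently taking
images is a bijection between sets of ST-configurations and Chu spaces over 3,
and the ST-structure closure `(S,T) ∈ ST ⇒ (S,S) ∈ ST` corresponds exactly to
the closure of the Chu space under raising `½` to `1`. -/
theorem st_chu3_iso (E : Type) [DecidableEq E] :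
    Function.Bijective (chuOf (E := E)) ∧
    Function.Bijective
      (fun ST : Set {c : STConfig E // c.2 ⊆ c.1} => chuOf '' ST) ∧
    ∀ ST : Set {c : STConfig E // c.2 ⊆ c.1},
      (∀ c ∈ ST,
        (⟨(c.1.1, c.1.1), Finset.Subset.refl _⟩ : {c : STConfig E // c.2 ⊆ c.1}) ∈ ST)
      ↔ (∀ x ∈ chuOf '' ST, raiseChu x ∈ chuOf '' ST) := by
  have hinj := (chuOf_bijective (E := E)).1
  exact ⟨chuOf_bijective, ⟨Set.image_injective.2 hinj, Set.image_surjective.2 chuOf_bijective.2⟩,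
    fun _ => (Function.Semiconj.mapsTo_image_iff chuOf_saturate hinj).symm⟩
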